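/- Let (xᵢ)_{i∈ℤ} be an increasing sequence in ℝ, let J = [A, B] ⊂ (0, 1/2] be an interval with 0 < A < B, and suppose there is α > 0 such that xᵢ₊₁ - xᵢ₋₁ ≥ α xᵢ whenever xᵢ ∈ [0, 1/2]. Partition J into M subintervals J^k = [σ^k A, σ^{k+1} A] where σ = (B/A)^{1/M} and M is chosen so that 1 ≤ log σ ≤ 2. Then the number of indices i with xᵢ ∈ J is at most 2M(σ-1)/α + 2M ≤ M(2(e²-1)/α + 2). -/

import Mathlib

/-!
Cut `[A, B]` into the `M` geometric blocks `[A σ^k, A σ^(k+1)]`. The indices of points in a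
block are consecutive and each of their gaps `x (i+1) - x (i-1)` is at least `α A σ^k`. The gaps
of all but the two extreme indices telescope to at most twice the block length `A σ^k (σ - 1)`,
so each block holds at most `2 (σ - 1) / α + 2` indices.
-/

open Set

theorem exists_lt_mem_Icc_succ_of_mem_Icc {α : Type*} [LinearOrder α] (p : ℕ → α) {y : α} :
    ∀ {n : ℕ}, 0 < n → y ∈ Icc (p 0) (p n) → ∃ k < n, y ∈ Icc (p k) (p (k + 1))
  | n + 1, _, hy => by
    by_cases hpn : p n ≤ y
    · exact ⟨n, n.lt_succ_self, hpn, hy.2⟩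
    · have hn : 0 < n := Nat.pos_of_ne_zero fun h => by subst h; exact hpn hy.1
      obtain ⟨k, hk, hyk⟩ := exists_lt_mem_Icc_succ_of_mem_Icc p hn ⟨hy.1, (not_le.mp hpn).le⟩
      exact ⟨k, hk.trans n.lt_succ_self, hyk⟩

theorem Int.finite_and_ncard_le_of_sub_le {s : Set ℤ} {n : ℕ}
    (h : ∀ i ∈ s, ∀ j ∈ s, j - i ≤ n) : s.Finite ∧ s.ncard ≤ n + 1 := by
  rcases s.eq_empty_or_nonempty with rfl | ⟨i₀, hi₀⟩
  · simp
  have hbdd : BddBelow s := ⟨i₀ - n, fun j hj => by linarith [h j hj i₀ hi₀]⟩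
  have hsub : s ⊆ Icc (sInf s) (sInf s + n) := fun j hj =>
    ⟨csInf_le hbdd hj, by linarith [h _ (Int.csInf_mem ⟨i₀, hi₀⟩ hbdd) j hj]⟩
  refine ⟨(finite_Icc _ _).subset hsub, ?_⟩
  calc s.ncard ≤ (Icc (sInf s) (sInf s + n)).ncard := ncard_le_ncard hsub (finite_Icc _ _)
    _ = n + 1 := by rw [← Finset.coe_Icc, ncard_coe_finset, Int.card_Icc]; omega

theorem mul_le_two_step_telescope (x : ℤ → ℝ) (c : ℝ) (i : ℤ) :
    ∀ n : ℕ, (∀ k, i < k → k ≤ i + n → c ≤ x (k + 1) - x (k - 1)) →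
      c * n ≤ x (i + n + 1) + x (i + n) - x (i + 1) - x i
  | 0, _ => by simp
  | n + 1, h => by
    have ih := mul_le_two_step_telescope x c i n fun k h₁ h₂ => h k h₁ (by push_cast; omega)
    have hlast : c ≤ x (i + n + 1 + 1) - x (i + n) := by
      simpa using h (i + n + 1) (by omega) (by push_cast; omega)
    push_cast [← add_assoc]
    linarith

theorem finite_and_ncard_preimage_Icc_le {x : ℤ → ℝ} (hx : Monotone x) {a b c : ℝ}
    (hab : a ≤ b) (hc : 0 < c) (hgap : ∀ i, x i ∈ Icc a b → c ≤ x (i + 1) - x (i - 1)) :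
    (x ⁻¹' Icc a b).Finite ∧ ((x ⁻¹' Icc a b).ncard : ℝ) ≤ 2 * (b - a) / c + 2 := by
  set N := ⌊2 * (b - a) / c⌋₊
  have hdiam : ∀ i ∈ x ⁻¹' Icc a b, ∀ j ∈ x ⁻¹' Icc a b, j - i ≤ (N + 1 : ℕ) := by
    intro i hi j hj
    rcases le_or_gt j (i + 1) with hji | hji
    · omega
    obtain ⟨n, rfl⟩ : ∃ n : ℕ, j = i + n + 1 := ⟨(j - i - 1).toNat, by omega⟩
    have hbetween : ∀ k, i ≤ k → k ≤ i + n + 1 → x k ∈ Icc a b := fun k h₁ h₂ =>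
      ⟨hi.1.trans (hx h₁), (hx h₂).trans hj.2⟩
    have htel := mul_le_two_step_telescope x c i n fun k h₁ h₂ =>
      hgap k (hbetween k h₁.le (by omega))
    have hn : (n : ℝ) ≤ 2 * (b - a) / c := by
      rw [le_div_iff₀ hc]
      linarith [hj.2, (hbetween (i + n) (by omega) (by omega)).2,
        (hbetween (i + 1) (by omega) (by omega)).1, hi.1]
    have := Nat.le_floor hn
    push_cast
    omega
  obtain ⟨hfin, hcard⟩ := Int.finite_and_ncard_le_of_sub_le hdiam
  refine ⟨hfin, ?_⟩
  calc ((x ⁻¹' Icc a b).ncard : ℝ) ≤ N + 1 + 1 := by exact_mod_cast hcard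
    _ ≤ 2 * (b - a) / c + 2 := by
      linarith [Nat.floor_le (div_nonneg (by linarith : 0 ≤ 2 * (b - a)) hc.le)]

theorem finite_and_ncard_preimage_Icc_pow_le {x : ℤ → ℝ} (hx : Monotone x) {A α σ : ℝ}
    (hA : 0 < A) (hα : 0 < α) (hσ : 1 < σ) {M : ℕ} (hM : 0 < M)
    (hgap : ∀ i, x i ∈ Icc A (A * σ ^ M) → α * x i ≤ x (i + 1) - x (i - 1)) :
    (x ⁻¹' Icc A (A * σ ^ M)).Finite ∧
      ((x ⁻¹' Icc A (A * σ ^ M)).ncard : ℝ) ≤ M * (2 * (σ - 1) / α + 2) := by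
  set block : ℕ → Set ℤ := fun k => x ⁻¹' Icc (A * σ ^ k) (A * σ ^ (k + 1))
  have hcover : x ⁻¹' Icc A (A * σ ^ M) ⊆ ⋃ k ∈ Finset.range M, block k := by
    intro i hi
    obtain ⟨k, hk, hik⟩ :=
      exists_lt_mem_Icc_succ_of_mem_Icc (fun k => A * σ ^ k) hM (by simpa using hi)
    exact mem_biUnion (Finset.mem_range.mpr hk) hik
  have hblock : ∀ k < M, (block k).Finite ∧
      ((block k).ncard : ℝ) ≤ 2 * (σ - 1) / α + 2 := by
    intro k hk
    have hσk : 0 < A * σ ^ k := by positivity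
    have hsub : Icc (A * σ ^ k) (A * σ ^ (k + 1)) ⊆ Icc A (A * σ ^ M) :=
      Icc_subset_Icc (le_mul_of_one_le_right hA.le (one_le_pow₀ hσ.le))
        (mul_le_mul_of_nonneg_left (pow_le_pow_right₀ hσ.le hk) hA.le)
    obtain ⟨hfin, hcard⟩ := finite_and_ncard_preimage_Icc_le hx
      (c := α * (A * σ ^ k)) (by rw [pow_succ]; nlinarith) (by positivity)
      fun i hi => (mul_le_mul_of_nonneg_left hi.1 hα.le).trans (hgap i (hsub hi))
    refine ⟨hfin, hcard.trans_eq ?_⟩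
    field_simp
    ring
  have hunion_fin : (⋃ k ∈ Finset.range M, block k).Finite :=
    (Finset.range M).finite_toSet.biUnion fun k hk => (hblock k (Finset.mem_range.mp hk)).1
  refine ⟨hunion_fin.subset hcover, ?_⟩
  calc ((x ⁻¹' Icc A (A * σ ^ M)).ncard : ℝ)
      ≤ ((⋃ k ∈ Finset.range M, block k).ncard : ℝ) := by
        exact_mod_cast ncard_le_ncard hcover hunion_fin
    _ ≤ ∑ k ∈ Finset.range M, ((block k).ncard : ℝ) := by
        exact_mod_cast (Finset.range M).set_ncard_biUnion_le block
    _ ≤ ∑ _k ∈ Finset.range M, (2 * (σ - 1) / α + 2) :=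
        Finset.sum_le_sum fun k hk => (hblock k (Finset.mem_range.mp hk)).2
    _ = M * (2 * (σ - 1) / α + 2) := by simp; ring

/-- Counting lemma: an increasing sequence with gaps `xᵢ₊₁ - xᵢ₋₁ ≥ α xᵢ` on
`[0, 1/2]` has at most `2M(σ-1)/α + 2M ≤ M(2(e²-1)/α + 2)` points in `J = [A,B]`,
where `σ = (B/A)^{1/M}` with `1 ≤ log σ ≤ 2`. -/
theorem counting_lemma
    (x : ℤ → ℝ) (hx : StrictMono x)
    (A B α : ℝ) (hA : 0 < A) (hAB : A < B) (hB : B ≤ 1 / 2) (hα : 0 < α)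
    (hgap : ∀ i : ℤ, x i ∈ Set.Icc (0 : ℝ) (1 / 2) → α * x i ≤ x (i + 1) - x (i - 1))
    (M : ℕ) (hM : 0 < M) (σ : ℝ) (hσ : σ = (B / A) ^ ((1 : ℝ) / (M : ℝ)))
    (hlog1 : 1 ≤ Real.log σ) (hlog2 : Real.log σ ≤ 2) :
    {i : ℤ | x i ∈ Set.Icc A B}.Finite ∧
    ({i : ℤ | x i ∈ Set.Icc A B}.ncard : ℝ) ≤ 2 * (M : ℝ) * (σ - 1) / α + 2 * (M : ℝ) ∧
    2 * (M : ℝ) * (σ - 1) / α + 2 * (M : ℝ) ≤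
      (M : ℝ) * (2 * (Real.exp 2 - 1) / α + 2) := by
  have hσpos : 0 < σ := hσ ▸ Real.rpow_pos_of_pos (div_pos (hA.trans hAB) hA) _
  have hσ1 : 1 < σ := (Real.log_pos_iff hσpos.le).mp (by linarith)
  have hσe : σ ≤ Real.exp 2 := (Real.log_le_iff_le_exp hσpos).mp hlog2
  have hBσ : B = A * σ ^ M := by
    rw [hσ, ← Real.rpow_natCast, ← Real.rpow_mul (div_pos (hA.trans hAB) hA).le,
      one_div_mul_cancel (by exact_mod_cast hM.ne'), Real.rpow_one, mul_div_cancel₀ _ hA.ne']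
  obtain ⟨hfin, hcard⟩ := finite_and_ncard_preimage_Icc_pow_le hx.monotone hA hα hσ1 hM
    fun i hi => hgap i ⟨hA.le.trans hi.1, (hBσ ▸ hi.2).trans hB⟩
  rw [← hBσ] at hfin hcard
  refine ⟨hfin, hcard.trans_eq (by ring), ?_⟩
  have hexp : 2 * (M : ℝ) * (σ - 1) / α ≤ 2 * M * (Real.exp 2 - 1) / α := by gcongr
  calc 2 * (M : ℝ) * (σ - 1) / α + 2 * M ≤ 2 * M * (Real.exp 2 - 1) / α + 2 * M := by linarith
    _ = M * (2 * (Real.exp 2 - 1) / α + 2) := by ring
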